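/- Let F be a cdf on [0,∞) with quantile function Q(s)=inf{x: F(x)≥s}, and let β>α>0, c>0, d≠0. Then the Hall-type expansion 1−F(x) = c·x^{−α} + d·x^{−β} + o(x^{−β}) as x→∞ holds if and only if Q(1−s) = c^{1/α}·s^{−1/α}·(1 + α⁻¹c^{−β/α}d·s^{β/α−1} + o(s^{β/α−1})) as s↓0. -/

import Mathlib

open MeasureTheory ProbabilityTheory Filter Set

noncomputable section

/-- The empirical cdf `Fₙ(t) = n⁻¹ #{i : xᵢ ≤ t}` of the sample `x`. -/
def empCdf (n : ℕ) (x : Fin n → ℝ) (t : ℝ) : ℝ :=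
  ((Finset.univ.filter fun i => x i ≤ t).card : ℝ) / n

/-- The empirical quantile function `Qₙ(s) = inf {t | Fₙ(t) ≥ s}`. -/
def empQuantile (n : ℕ) (x : Fin n → ℝ) (s : ℝ) : ℝ :=
  sInf {t : ℝ | s ≤ empCdf n x t}

/-- The `i`-th order statistic `x_{i,n}` (for `i = 1, …, n`) of the sample `x`. -/
def orderStat (n : ℕ) (x : Fin n → ℝ) (i : ℕ) : ℝ :=
  empQuantile n x (i / n)

/-- The (generalized inverse) quantile function `Q(s) = inf {x | F(x) ≥ s}` of a cdf `F`. -/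
def quantileFun (F : ℝ → ℝ) (s : ℝ) : ℝ :=
  sInf {x : ℝ | s ≤ F x}

variable {Ω : Type} [MeasurableSpace Ω]

/-- `Xₙ = o_p(1)`: the sequence tends to `0` in probability. -/
def oP1 (P : Measure Ω) (X : ℕ → Ω → ℝ) : Prop :=
  TendstoInMeasure P X atTop (fun _ => (0 : ℝ))

/-- `Xₙ = O_p(aₙ)`: the sequence is stochastically bounded at rate `aₙ`. -/
def bigOP (P : Measure Ω) (X : ℕ → Ω → ℝ) (a : ℕ → ℝ) : Prop :=
  ∀ ε : ℝ, 0 < ε → ∃ M : ℝ, 0 < M ∧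
    ∀ᶠ n in atTop, (P {ω | M * |a n| < |X n ω|}).toReal < ε

/-- `Xₙ → N(m, v)` in distribution (pointwise convergence of cdf's; the limiting normal
cdf is continuous everywhere, so this is the usual weak convergence). -/
def TendstoInDistNormal (P : Measure Ω) (X : ℕ → Ω → ℝ) (m v : ℝ) : Prop :=
  ∀ x : ℝ, Tendsto (fun n => (P {ω | X n ω ≤ x}).toReal) atTop
    (nhds ((gaussianReal m (Real.toNNReal v)) (Iic x)).toReal)

/-- `X₀, X₁, …` are i.i.d. with common cdf `F` under `P`. -/
def IsIIDWithCdf (P : Measure Ω) (X : ℕ → Ω → ℝ) (F : ℝ → ℝ) : Prop :=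
  (∀ i, Measurable (X i)) ∧ iIndepFun X P ∧
    ∀ i, ∀ x : ℝ, (P {ω | X i ω ≤ x}).toReal = F x

/-- `U₀, U₁, …` are i.i.d. uniform-(0,1) random variables under `P`. -/
def IsIIDUniform (P : Measure Ω) (U : ℕ → Ω → ℝ) : Prop :=
  (∀ i, Measurable (U i)) ∧ iIndepFun U P ∧
    ∀ i, P.map (U i) = volume.restrict (Ioo (0 : ℝ) 1)

/-- `B` is a Brownian bridge on `[0,1]`: a centred Gaussian process, vanishing at the
endpoints, whose covariance function is `min s t - s * t` (joint Gaussianity is expressed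
through all finite linear combinations being Gaussian). -/
def IsBrownianBridge (P : Measure Ω) (B : ℝ → Ω → ℝ) : Prop :=
  (∀ s, Measurable (B s)) ∧ (∀ ω, B 0 ω = 0) ∧ (∀ ω, B 1 ω = 0) ∧
    ∀ (m : ℕ) (t : Fin m → ℝ), (∀ i, t i ∈ Icc (0 : ℝ) 1) → ∀ c : Fin m → ℝ,
      P.map (fun ω => ∑ i, c i * B (t i) ω) =
        gaussianReal 0 (Real.toNNReal (∑ i, ∑ j, c i * c j * (min (t i) (t j) - t i * t j)))

/-- The empirical quantile function `Vₙ` of the first `n` of the `Uᵢ`'s: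
`Vₙ(s) = U_{i,n}` for `(i-1)/n < s ≤ i/n`. -/
def empQuantU (U : ℕ → Ω → ℝ) (n : ℕ) (s : ℝ) (ω : Ω) : ℝ :=
  empQuantile n (fun j : Fin n => U j ω) s

/-- The Csörgő–Csörgő–Horváth–Mason coupling property of the sequence of Brownian bridges
`Bₙ` with the uniform empirical quantile process:  for every `0 ≤ τ < 1/2`,
`sup_{1/n ≤ s ≤ 1-1/n} |√n (s - Vₙ(s)) - Bₙ(s)| / (s(1-s))^{1/2-τ} = O_p(n^{-τ})`. -/
def CsCsHMCoupling (P : Measure Ω) (U : ℕ → Ω → ℝ) (B : ℕ → ℝ → Ω → ℝ) : Prop :=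
  ∀ τ : ℝ, 0 ≤ τ → τ < 1/2 →
    bigOP P
      (fun n ω => ⨆ s : Icc (1/(n : ℝ)) (1 - 1/(n : ℝ)),
        |Real.sqrt n * ((s : ℝ) - empQuantU U n s ω) - B n (s : ℝ) ω| /
          ((s : ℝ) * (1 - (s : ℝ))) ^ ((1 : ℝ)/2 - τ))
      (fun n => (n : ℝ) ^ (-τ))

/-- The third-order condition of regular variation for the quantile function `Q`,
with first-order parameter `α`, second-order parameter `β` (`λ = β/α`), third-order
parameter `ρ` and auxiliary functions `A₁ → 0`, `A₂ → 0` (`A₂` of constant sign near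
infinity), expressed in terms of the tail quantile function `U(t) = Q(1 - 1/t)`. -/
def ThirdOrderCondition (Q : ℝ → ℝ) (α β ρ : ℝ) (A₁ A₂ : ℝ → ℝ) : Prop :=
  Tendsto A₁ atTop (nhds 0) ∧ Tendsto A₂ atTop (nhds 0) ∧
  ((∀ᶠ t in atTop, 0 < A₂ t) ∨ (∀ᶠ t in atTop, A₂ t < 0)) ∧
  ∀ x : ℝ, 0 < x →
    Tendsto (fun t : ℝ =>
        ((Real.log (Q (1 - 1/(t*x)) / Q (1 - 1/t)) - α⁻¹ * Real.log x) / A₁ t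
          - (x ^ (1 - β/α) - 1) / (1 - β/α)) / A₂ t)
      atTop
      (nhds (ρ⁻¹ * ((x ^ (1 - β/α + ρ) - 1) / (1 - β/α + ρ) - (x ^ (1 - β/α) - 1) / (1 - β/α))))

/-- Condition (K): `1 < kₙ < n`, `kₙ → ∞` and `kₙ/n → 0`. -/
def KCond (k : ℕ → ℕ) : Prop :=
  (∀ᶠ n in atTop, 1 < k n ∧ k n < n) ∧
  Tendsto (fun n => k n) atTop atTop ∧
  Tendsto (fun n => (k n : ℝ) / n) atTop (nhds 0)

/-- Conditions on `k` and the auxiliary functions: `√k |A₁(n/k)| → ∞`,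
`√k A₁(n/k)² → 0` and `√k A₁(n/k) A₂(n/k) → 0`. -/
def A1A2Cond (k : ℕ → ℕ) (A₁ A₂ : ℝ → ℝ) : Prop :=
  Tendsto (fun n => Real.sqrt (k n) * |A₁ ((n : ℝ) / (k n))|) atTop atTop ∧
  Tendsto (fun n => Real.sqrt (k n) * (A₁ ((n : ℝ) / (k n)))^2) atTop (nhds 0) ∧
  Tendsto (fun n => Real.sqrt (k n) * A₁ ((n : ℝ) / (k n)) * A₂ ((n : ℝ) / (k n))) atTop (nhds 0)

/-- The Hill estimator `α̂ₙ^H` based on the `k` upper order statistics. -/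
def hillEst (n k : ℕ) (x : Fin n → ℝ) : ℝ :=
  ((k : ℝ)⁻¹ * (∑ i ∈ Finset.Icc 1 k, Real.log (orderStat n x (n - i + 1)))
    - Real.log (orderStat n x (n - k)))⁻¹

/-- `k⁻¹ ∑_{i=1}^k log (X_{n-i+1,n}/X_{n-k,n})`. -/
def meanLogRatio (n k : ℕ) (x : Fin n → ℝ) : ℝ :=
  (k : ℝ)⁻¹ * ∑ i ∈ Finset.Icc 1 k, Real.log (orderStat n x (n - i + 1) / orderStat n x (n - k))

/-- `H(α) = 1/α - k⁻¹ ∑_{i=1}^k log (X_{n-i+1,n}/X_{n-k,n})`. -/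
def Hfun (n k : ℕ) (x : Fin n → ℝ) (a : ℝ) : ℝ :=
  1/a - meanLogRatio n k x

/-- `Gᵢ(α,β)` from the censored maximum likelihood equations of Peng and Qi. -/
def Gfun (n k : ℕ) (x : Fin n → ℝ) (a b : ℝ) (i : ℕ) : ℝ :=
  a/b * (1 + a*b/(a-b) * Hfun n k x a) *
      (orderStat n x (n - i + 1) / orderStat n x (n - k)) ^ (b - a)
    - a*b/(a-b) * Hfun n k x a

/-- `(a, b)` is a solution `(α̂, β̂)` of the censored maximum likelihood equations
(under the constraint `β > α̂ₙ^H`). -/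
def IsCMLSolution (n k : ℕ) (x : Fin n → ℝ) (a b : ℝ) : Prop :=
  hillEst n k x < b ∧
  (k : ℝ)⁻¹ * ∑ i ∈ Finset.Icc 1 k, (Gfun n k x a b i)⁻¹ = 1 ∧
  (k : ℝ)⁻¹ * ∑ i ∈ Finset.Icc 1 k, (Gfun n k x a b i)⁻¹ *
      Real.log (orderStat n x (n - i + 1) / orderStat n x (n - k)) = b⁻¹

/-- The estimator `ĉ` of the scale constant `c`. -/
def cHat (n k : ℕ) (x : Fin n → ℝ) (a b : ℝ) : ℝ :=
  a*b/(a-b) * ((k : ℝ)/n) * orderStat n x (n - k) ^ a * (1/b - meanLogRatio n k x)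

/-- The estimator `d̂` of the second-order constant `d`. -/
def dHat (n k : ℕ) (x : Fin n → ℝ) (a b : ℝ) : ℝ :=
  a*b/(b-a) * ((k : ℝ)/n) * orderStat n x (n - k) ^ b * (1/a - meanLogRatio n k x)

/-- The bias-reduced estimator `μ̂ₙ` of the mean, with plugged-in values
`a = α̂`, `b = β̂`, `c = ĉ`, `d = d̂`. -/
def muHat (n k : ℕ) (x : Fin n → ℝ) (a b c d : ℝ) : ℝ :=
  (k : ℝ)/n * ((n : ℝ) * c / k) ^ (1/a) *
    (a/(a-1) + d * c ^ (-(b/a)) * ((k : ℝ)/n) ^ (b/a - 1) / (b-1)) +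
  (n : ℝ)⁻¹ * ∑ i ∈ Finset.Icc (k+1) n, orderStat n x (n - i + 1)

/-- `W₁ₙ := √(n/k) Bₙ(1-k/n) - √(n/k) ∫₀¹ s⁻¹ Bₙ(1-ks/n) ds`. -/
def W1 (B : ℕ → ℝ → Ω → ℝ) (k : ℕ → ℕ) (n : ℕ) (ω : Ω) : ℝ :=
  Real.sqrt ((n : ℝ)/(k n)) * B n (1 - (k n : ℝ)/n) ω
    - Real.sqrt ((n : ℝ)/(k n)) * ∫ s in (0 : ℝ)..1, s⁻¹ * B n (1 - (k n : ℝ) * s / n) ω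

/-- `W₂ₙ := (λ⁻¹-1) √(n/k) Bₙ(1-k/n) + (λ-1) √(n/k) ∫₀¹ s^{λ-2} Bₙ(1-ks/n) ds`. -/
def W2 (l : ℝ) (B : ℕ → ℝ → Ω → ℝ) (k : ℕ → ℕ) (n : ℕ) (ω : Ω) : ℝ :=
  (l⁻¹ - 1) * Real.sqrt ((n : ℝ)/(k n)) * B n (1 - (k n : ℝ)/n) ω
    + (l - 1) * Real.sqrt ((n : ℝ)/(k n)) *
        ∫ s in (0 : ℝ)..1, s ^ (l - 2) * B n (1 - (k n : ℝ) * s / n) ω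

/-- `W₃ₙ := (1-λ) √(n/k) ∫₀¹ s^{λ-2} (log s) Bₙ(1-ks/n) ds + λ⁻² √(n/k) Bₙ(1-k/n)
  - √(n/k) ∫₀¹ s^{λ-2} Bₙ(1-ks/n) ds`. -/
def W3 (l : ℝ) (B : ℕ → ℝ → Ω → ℝ) (k : ℕ → ℕ) (n : ℕ) (ω : Ω) : ℝ :=
  (1 - l) * Real.sqrt ((n : ℝ)/(k n)) *
      (∫ s in (0 : ℝ)..1, s ^ (l - 2) * Real.log s * B n (1 - (k n : ℝ) * s / n) ω)
    + (l^2)⁻¹ * Real.sqrt ((n : ℝ)/(k n)) * B n (1 - (k n : ℝ)/n) ω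
    - Real.sqrt ((n : ℝ)/(k n)) * ∫ s in (0 : ℝ)..1, s ^ (l - 2) * B n (1 - (k n : ℝ) * s / n) ω

/-- `W₄ₙ := -(∫_{k/n}^1 Bₙ(1-s) dQ(1-s)) / (√(k/n) (nc/k)^{1/α})`, where the integral is a
Lebesgue–Stieltjes integral with respect to the nonincreasing function `s ↦ Q(1-s)`
(equivalently, the integral with respect to the Lebesgue–Stieltjes measure of the
nondecreasing function `s ↦ -Q(1-s)`). -/
def W4 (Q : ℝ → ℝ) (hQ : Monotone (fun s => -(Q (1 - s)))) (B : ℕ → ℝ → Ω → ℝ)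
    (k : ℕ → ℕ) (c α : ℝ) (n : ℕ) (ω : Ω) : ℝ :=
  (∫ s in Ioc ((k n : ℝ)/n) 1, B n (1 - s) ω ∂(hQ.stieltjesFunction.measure)) /
    (Real.sqrt ((k n : ℝ)/n) * ((n : ℝ) * c / (k n)) ^ (1/α))

/-- `η₁ := λ⁴/(λ-1)⁴`. -/
def eta1 (l : ℝ) : ℝ := l^4/(l-1)^4
/-- `η₂ := λ²(2λ-1)(3λ-1)/(λ-1)⁵`. -/
def eta2 (l : ℝ) : ℝ := l^2*(2*l-1)*(3*l-1)/(l-1)^5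
/-- `η₃ := λ³(2λ-1)/(λ-1)⁴`. -/
def eta3 (l : ℝ) : ℝ := l^3*(2*l-1)/(l-1)^4

/-- Hall's expansion of the quantile function:
`Q(1-s) = c^{1/α} s^{-1/α} (1 + α⁻¹ c^{-β/α} d s^{β/α-1} + o(s^{β/α-1}))` as `s ↓ 0`. -/
def HallQuantile (Q : ℝ → ℝ) (α β c d : ℝ) : Prop :=
  ∃ r : ℝ → ℝ, Tendsto r (nhdsWithin 0 (Ioi 0)) (nhds 0) ∧
    ∀ᶠ s in nhdsWithin 0 (Ioi (0 : ℝ)),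
      Q (1 - s) = c ^ (1/α) * s ^ (-1/α) *
        (1 + α⁻¹ * c ^ (-(β/α)) * d * s ^ (β/α - 1) + r s * s ^ (β/α - 1))

/-- The asymptotic variance `σ²(α,β)` in the CLT for the bias-reduced mean estimator. -/
def sigma2 (α β : ℝ) : ℝ :=
  α^2*β^4/((α-1)^4*(α-β)^4) + 2/(2-α) + 2*α*β^2/((α-1)^2*(α-β)^2)

end


open Filter Set Topology

section helpers

lemma slope_lemma (a e : ℝ) :
    Tendsto (fun u : ℝ => ((1 + a*u) ^ e - 1)/u) (nhdsWithin 0 {(0:ℝ)}ᶜ) (nhds (e*a)) := by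
  have hg : HasDerivAt (fun u : ℝ => 1 + a*u) a 0 := by
    simpa using ((hasDerivAt_id (0:ℝ)).const_mul a).const_add 1
  have hf : HasDerivAt (fun x : ℝ => x ^ e) (e * (1:ℝ) ^ (e-1)) ((fun u : ℝ => 1 + a*u) 0) := by
    simpa using Real.hasDerivAt_rpow_const (x := (1:ℝ)) (p := e) (Or.inl one_ne_zero)
  have hfg : HasDerivAt (fun u : ℝ => (1 + a*u) ^ e) (e * a) 0 := by
    have := HasDerivAt.comp 0 hf hg
    simpa [Function.comp_def, Real.one_rpow] using this
  have := hasDerivAt_iff_tendsto_slope.mp hfg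
  refine this.congr fun u => ?_
  simp [slope_def_field, Real.one_rpow]

lemma keyA (α β c a : ℝ) (d : ℝ) (hα : 0 < α) (hβ : α < β) (hc : 0 < c)
    (ρ : ℝ → ℝ) (hρ : Tendsto ρ atTop (nhds 0)) :
    Tendsto (fun s : ℝ =>
      (c * (c ^ (1/α) * s ^ (-1/α) * (1 + a * s ^ (β/α - 1))) ^ (-α)
        + d * (c ^ (1/α) * s ^ (-1/α) * (1 + a * s ^ (β/α - 1))) ^ (-β)
        + ρ (c ^ (1/α) * s ^ (-1/α) * (1 + a * s ^ (β/α - 1)))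
            * (c ^ (1/α) * s ^ (-1/α) * (1 + a * s ^ (β/α - 1))) ^ (-β)
        - s) / (s * s ^ (β/α - 1)))
      (nhdsWithin 0 (Ioi 0)) (nhds (-(α*a) + c ^ (-(β/α)) * d)) := by
  set θ := β/α - 1 with hθdef
  have hαne : α ≠ 0 := hα.ne'
  have hθ : 0 < θ := by
    have : 1 < β/α := (one_lt_div hα).mpr hβ
    simp [hθdef]; linarith
  set X : ℝ → ℝ := fun s => c ^ (1/α) * s ^ (-1/α) * (1 + a * s ^ θ) with hXdef
  -- s^θ → 0 within Ioi 0
  have hu0 : Tendsto (fun s : ℝ => s ^ θ) (nhdsWithin 0 (Ioi 0)) (nhds 0) := by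
    have := (Real.continuousAt_rpow_const 0 θ (Or.inr hθ.le)).tendsto.mono_left
      (nhdsWithin_le_nhds (s := Ioi (0:ℝ)))
    simpa [Real.zero_rpow hθ.ne'] using this
  have hu : Tendsto (fun s : ℝ => s ^ θ) (nhdsWithin 0 (Ioi 0)) (nhdsWithin 0 (Ioi 0)) := by
    refine tendsto_nhdsWithin_iff.mpr ⟨hu0, ?_⟩
    exact eventually_mem_nhdsWithin.mono fun s hs => Real.rpow_pos_of_pos hs θ
  have hfac : Tendsto (fun s : ℝ => 1 + a * s ^ θ) (nhdsWithin 0 (Ioi 0)) (nhds 1) := by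
    have := (tendsto_const_nhds (x := (1:ℝ))).add ((tendsto_const_nhds (x := a)).mul hu0)
    simpa using this
  have hfacpos : ∀ᶠ s in nhdsWithin 0 (Ioi (0:ℝ)), 0 < 1 + a * s ^ θ :=
    hfac.eventually (eventually_gt_nhds one_pos)
  have hspos : ∀ᶠ s in nhdsWithin 0 (Ioi (0:ℝ)), 0 < s := eventually_mem_nhdsWithin
  -- X → atTop
  have hinv : Tendsto (fun s : ℝ => s ^ (-1/α)) (nhdsWithin 0 (Ioi 0)) atTop := by
    have h1 : Tendsto (fun s : ℝ => (s⁻¹) ^ (1/α)) (nhdsWithin 0 (Ioi 0)) atTop :=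
      (tendsto_rpow_atTop (by positivity)).comp tendsto_inv_nhdsGT_zero
    refine h1.congr' (eventually_mem_nhdsWithin.mono fun s (hs : 0 < s) => ?_)
    rw [← Real.rpow_neg_one s, ← Real.rpow_mul hs.le]
    congr 1
    ring
  have hX : Tendsto X (nhdsWithin 0 (Ioi 0)) atTop := by
    have h2 : Tendsto (fun s : ℝ => c ^ (1/α) * s ^ (-1/α)) (nhdsWithin 0 (Ioi 0)) atTop :=
      hinv.const_mul_atTop (Real.rpow_pos_of_pos hc _)
    exact h2.atTop_mul_pos one_pos hfac
  -- limits of the two terms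
  have hterm1 : Tendsto (fun s : ℝ => ((1 + a * s ^ θ) ^ (-α) - 1) / s ^ θ)
      (nhdsWithin 0 (Ioi 0)) (nhds (-α * a)) := by
    have := (slope_lemma a (-α)).comp (hu.mono_right (nhdsWithin_mono _ fun x hx => ne_of_gt hx))
    exact this
  have hterm2 : Tendsto (fun s : ℝ => (d + ρ (X s)) * c ^ (-(β/α)) * (1 + a * s ^ θ) ^ (-β))
      (nhdsWithin 0 (Ioi 0)) (nhds (d * c ^ (-(β/α)))) := by
    have hρX : Tendsto (fun s => ρ (X s)) (nhdsWithin 0 (Ioi 0)) (nhds 0) := hρ.comp hX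
    have hbfac : Tendsto (fun s : ℝ => (1 + a * s ^ θ) ^ (-β)) (nhdsWithin 0 (Ioi 0)) (nhds 1) := by
      have hcont := (Real.continuousAt_rpow_const 1 (-β) (Or.inl one_ne_zero)).tendsto
      have := hcont.comp hfac
      simpa [Function.comp_def, Real.one_rpow] using this
    have := (((tendsto_const_nhds (x := d)).add hρX).mul
      (tendsto_const_nhds (x := c ^ (-(β/α))))).mul hbfac
    simpa using this
  have hsum := hterm1.add hterm2
  rw [show (-(α*a) + c ^ (-(β/α)) * d) = -α*a + d * c ^ (-(β/α)) from by ring]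
  refine hsum.congr' ?_
  filter_upwards [hspos, hfacpos] with s hs hf1
  have hsne : s ≠ 0 := hs.ne'
  have hupos : 0 < s ^ θ := Real.rpow_pos_of_pos hs θ
  have hXpos : 0 < X s := by
    have := Real.rpow_pos_of_pos hc (1/α)
    have := Real.rpow_pos_of_pos hs (-1/α)
    positivity
  -- rpow computations
  have hxa : (X s) ^ (-α) = c⁻¹ * s * (1 + a * s ^ θ) ^ (-α) := by
    rw [hXdef]
    rw [Real.mul_rpow (by positivity) hf1.le, Real.mul_rpow (by positivity) (by positivity),
      ← Real.rpow_mul hc.le, ← Real.rpow_mul hs.le]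
    rw [show 1/α * (-α) = -1 by field_simp, show -1/α * (-α) = 1 by field_simp]
    rw [Real.rpow_neg_one, Real.rpow_one]
  have hxb : (X s) ^ (-β) = c ^ (-(β/α)) * (s * s ^ θ) * (1 + a * s ^ θ) ^ (-β) := by
    rw [hXdef]
    rw [Real.mul_rpow (by positivity) hf1.le, Real.mul_rpow (by positivity) (by positivity),
      ← Real.rpow_mul hc.le, ← Real.rpow_mul hs.le]
    rw [show 1/α * (-β) = -(β/α) by field_simp,
      show -1/α * (-β) = 1 + θ by rw [hθdef]; field_simp; ring]
    rw [Real.rpow_add hs, Real.rpow_one]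
  show _ = _
  rw [show c ^ (1 / α) * s ^ (-1 / α) * (1 + a * s ^ θ) = X s from rfl, hxa, hxb]
  have hune : s ^ θ ≠ 0 := hupos.ne'
  field_simp
  ring


lemma keyB (α β c d b : ℝ) (hα : 0 < α) (hβ : α < β) (hc : 0 < c)
    (r : ℝ → ℝ) (hr : Tendsto r (nhdsWithin 0 (Ioi 0)) (nhds 0)) :
    Tendsto (fun x : ℝ =>
      (c ^ (1/α) * (c * x ^ (-α) * (1 + b * x ^ (α - β))) ^ (-1/α)
        * (1 + α⁻¹ * c ^ (-(β/α)) * d * (c * x ^ (-α) * (1 + b * x ^ (α - β))) ^ (β/α - 1)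
             + r (c * x ^ (-α) * (1 + b * x ^ (α - β)))
               * (c * x ^ (-α) * (1 + b * x ^ (α - β))) ^ (β/α - 1))
        - x) / (x * x ^ (α - β)))
      atTop (nhds (-(1/α)*b + α⁻¹ * c ^ (-(β/α)) * d * c ^ (β/α - 1))) := by
  set θ := β/α - 1 with hθdef
  have hαne : α ≠ 0 := hα.ne'
  have hθ : 0 < θ := by
    have : 1 < β/α := (one_lt_div hα).mpr hβ
    simp [hθdef]; linarith
  set K := α⁻¹ * c ^ (-(β/α)) * d with hKdef
  set S : ℝ → ℝ := fun x => c * x ^ (-α) * (1 + b * x ^ (α - β)) with hSdef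
  have hv0 : Tendsto (fun x : ℝ => x ^ (α - β)) atTop (nhds 0) := by
    have := tendsto_rpow_neg_atTop (y := β - α) (by linarith)
    simpa [neg_sub] using this
  have hxpos : ∀ᶠ x : ℝ in atTop, 0 < x := eventually_gt_atTop 0
  have hv : Tendsto (fun x : ℝ => x ^ (α - β)) atTop (nhdsWithin 0 {(0:ℝ)}ᶜ) := by
    refine tendsto_nhdsWithin_iff.mpr ⟨hv0, ?_⟩
    exact hxpos.mono fun x hx => (Real.rpow_pos_of_pos hx _).ne'
  have hfac : Tendsto (fun x : ℝ => 1 + b * x ^ (α - β)) atTop (nhds 1) := by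
    have := (tendsto_const_nhds (x := (1:ℝ))).add ((tendsto_const_nhds (x := b)).mul hv0)
    simpa using this
  have hfacpos : ∀ᶠ x : ℝ in atTop, 0 < 1 + b * x ^ (α - β) :=
    hfac.eventually (eventually_gt_nhds one_pos)
  have hS0 : Tendsto S atTop (nhds 0) := by
    have := ((tendsto_rpow_neg_atTop hα).const_mul c).mul hfac
    simpa [hSdef] using this
  have hS : Tendsto S atTop (nhdsWithin 0 (Ioi 0)) := by
    refine tendsto_nhdsWithin_iff.mpr ⟨hS0, ?_⟩
    filter_upwards [hxpos, hfacpos] with x hx hf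
    have : 0 < x ^ (-α) := Real.rpow_pos_of_pos hx _
    exact mul_pos (mul_pos hc this) hf
  have hterm1 : Tendsto (fun x : ℝ => ((1 + b * x ^ (α - β)) ^ (-1/α) - 1) / x ^ (α - β))
      atTop (nhds (-1/α * b)) := (slope_lemma b (-1/α)).comp hv
  have hrS : Tendsto (fun x => r (S x)) atTop (nhds 0) := hr.comp hS
  have hP : Tendsto (fun x : ℝ => (1 + b * x ^ (α - β)) ^ (-1/α)) atTop (nhds 1) := by
    have := ((Real.continuousAt_rpow_const 1 (-1/α) (Or.inl one_ne_zero)).tendsto).comp hfac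
    simpa [Function.comp_def, Real.one_rpow] using this
  have hT : Tendsto (fun x : ℝ => (1 + b * x ^ (α - β)) ^ θ) atTop (nhds 1) := by
    have := ((Real.continuousAt_rpow_const 1 θ (Or.inl one_ne_zero)).tendsto).comp hfac
    simpa [Function.comp_def, Real.one_rpow] using this
  have hterm2 : Tendsto (fun x : ℝ => (K + r (S x)) * c ^ θ
        * (1 + b * x ^ (α - β)) ^ θ * (1 + b * x ^ (α - β)) ^ (-1/α))
      atTop (nhds (K * c ^ θ)) := by
    have := (((tendsto_const_nhds (x := K)).add hrS).mul
      (tendsto_const_nhds (x := c ^ θ))).mul hT |>.mul hP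
    simpa using this
  have hsum := hterm1.add hterm2
  rw [show (-(1/α)*b + α⁻¹ * c ^ (-(β/α)) * d * c ^ (β/α - 1)) = -1/α * b + K * c ^ θ from by
    rw [hKdef, hθdef]; ring]
  refine hsum.congr' ?_
  filter_upwards [hxpos, hfacpos] with x hx hf1
  have hxne : x ≠ 0 := hx.ne'
  have hvpos : 0 < x ^ (α - β) := Real.rpow_pos_of_pos hx _
  have hxa : (S x) ^ (-1/α) = c ^ (-1/α) * x * (1 + b * x ^ (α - β)) ^ (-1/α) := by
    rw [hSdef]
    rw [Real.mul_rpow (by positivity) hf1.le, Real.mul_rpow hc.le (by positivity),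
      ← Real.rpow_mul hx.le]
    rw [show -α * (-1/α) = 1 by field_simp, Real.rpow_one]
  have hxb : (S x) ^ θ = c ^ θ * x ^ (α - β) * (1 + b * x ^ (α - β)) ^ θ := by
    rw [hSdef]
    rw [Real.mul_rpow (by positivity) hf1.le, Real.mul_rpow hc.le (by positivity),
      ← Real.rpow_mul hx.le]
    rw [show -α * θ = α - β by rw [hθdef]; field_simp; ring]
  have hcinv : c ^ (-1/α) = (c ^ (1/α))⁻¹ := by
    rw [neg_div, Real.rpow_neg hc.le]
  show _ = _
  rw [show c * x ^ (-α) * (1 + b * x ^ (α - β)) = S x from rfl, hxa, hxb, hcinv]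
  have hvne : x ^ (α - β) ≠ 0 := hvpos.ne'
  have hc1 : (c : ℝ) ^ (1/α) ≠ 0 := (Real.rpow_pos_of_pos hc (1/α)).ne'
  field_simp
  ring

lemma cdf_set_nonempty {F : ℝ → ℝ} (hFtop : Tendsto F atTop (nhds 1)) {p : ℝ} (hp1 : p < 1) :
    {y : ℝ | p ≤ F y}.Nonempty := by
  obtain ⟨y, hy⟩ := (hFtop.eventually (eventually_gt_nhds hp1)).exists
  exact ⟨y, hy.le⟩

lemma quantile_le_iff {F : ℝ → ℝ} (hmono : Monotone F)
    (hF0 : ∀ x < (0 : ℝ), F x = 0) (hFtop : Tendsto F atTop (nhds 1))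
    (hrc : ∀ x, ContinuousWithinAt F (Ici x) x)
    {p : ℝ} (hp0 : 0 < p) (hp1 : p < 1) (x : ℝ) :
    sInf {y : ℝ | p ≤ F y} ≤ x ↔ p ≤ F x := by
  have hne : {y : ℝ | p ≤ F y}.Nonempty := cdf_set_nonempty hFtop hp1
  have hbdd : BddBelow {y : ℝ | p ≤ F y} := by
    refine ⟨0, fun y hy => ?_⟩
    by_contra h
    push_neg at h
    rw [Set.mem_setOf_eq, hF0 y h] at hy
    linarith
  constructor
  · intro h
    -- p ≤ F z for all z > x
    have key : ∀ z, x < z → p ≤ F z := by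
      intro z hz
      obtain ⟨w, hw, hwz⟩ := exists_lt_of_csInf_lt hne (lt_of_le_of_lt h hz)
      exact le_trans hw (hmono hwz.le)
    have htt : Tendsto F (nhdsWithin x (Set.Ioi x)) (nhds (F x)) :=
      (hrc x).mono_left (nhdsWithin_mono x Set.Ioi_subset_Ici_self)
    exact ge_of_tendsto htt (eventually_mem_nhdsWithin.mono fun z hz => key z hz)
  · intro h
    exact csInf_le hbdd h

end helpers

open MeasureTheory Filter Set in
/-- equivalence of Hall's expansion of the tail of the cdf `F` and of its
quantile function `Q`. -/
theorem statement9 (F : ℝ → ℝ) (hmono : Monotone F)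
    (hF0 : ∀ x < (0 : ℝ), F x = 0) (hFtop : Tendsto F atTop (nhds 1))
    (hrc : ∀ x, ContinuousWithinAt F (Ici x) x)
    (Q : ℝ → ℝ) (hQ : Q = quantileFun F)
    (α β c d : ℝ) (hα : 0 < α) (hβ : α < β) (hc : 0 < c) (hd : d ≠ 0) :
    Tendsto (fun x : ℝ => (1 - F x - c * x ^ (-α) - d * x ^ (-β)) / x ^ (-β))
        atTop (nhds 0) ↔
    Tendsto (fun s : ℝ =>
        (Q (1 - s) / (c ^ (1/α) * s ^ (-1/α))
          - (1 + α⁻¹ * c ^ (-(β/α)) * d * s ^ (β/α - 1))) / s ^ (β/α - 1))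
      (nhdsWithin 0 (Ioi 0)) (nhds 0) := by
  subst hQ
  have hαne : α ≠ 0 := hα.ne'
  set θ := β/α - 1 with hθdef
  have hθ : 0 < θ := by
    have : 1 < β/α := (one_lt_div hα).mpr hβ
    simp [hθdef]; linarith
  set K := α⁻¹ * c ^ (-(β/α)) * d with hKdef
  have hQdef : ∀ p : ℝ, quantileFun F p = sInf {x : ℝ | p ≤ F x} := fun p => rfl
  constructor
  · -- Tail expansion → quantile expansion
    intro h
    set ρ : ℝ → ℝ := fun x => (1 - F x - c * x ^ (-α) - d * x ^ (-β)) / x ^ (-β) with hρdef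
    have hid : ∀ x : ℝ, 0 < x →
        c * x ^ (-α) + d * x ^ (-β) + ρ x * x ^ (-β) = 1 - F x := by
      intro x hx
      have hne : x ^ (-β) ≠ 0 := (Real.rpow_pos_of_pos hx _).ne'
      rw [hρdef]
      field_simp
      ring
    rw [Metric.tendsto_nhds]
    intro ε hε
    set ε' := ε/2 with hε'def
    have hε' : 0 < ε' := by positivity
    have hαK : c ^ (-(β/α)) * d = α * K := by rw [hKdef]; field_simp
    -- upper bound
    have hAP := keyA α β c (K + ε') d hα hβ hc ρ h
    have hLP : -(α*(K + ε')) + c ^ (-(β/α)) * d < 0 := by rw [hαK]; nlinarith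
    have hevP := hAP.eventually (eventually_lt_nhds hLP)
    have hAM := keyA α β c (K - ε') d hα hβ hc ρ h
    have hLM : (0:ℝ) < -(α*(K - ε')) + c ^ (-(β/α)) * d := by rw [hαK]; nlinarith
    have hevM := hAM.eventually (eventually_gt_nhds hLM)
    have hspos : ∀ᶠ s in nhdsWithin 0 (Ioi (0:ℝ)), 0 < s := eventually_mem_nhdsWithin
    have hs1 : ∀ᶠ s in nhdsWithin 0 (Ioi (0:ℝ)), s < 1 :=
      nhdsWithin_le_nhds (eventually_lt_nhds one_pos)
    have hu0 : Tendsto (fun s : ℝ => s ^ θ) (nhdsWithin 0 (Ioi 0)) (nhds 0) := by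
      have := (Real.continuousAt_rpow_const 0 θ (Or.inr hθ.le)).tendsto.mono_left
        (nhdsWithin_le_nhds (s := Ioi (0:ℝ)))
      simpa [Real.zero_rpow hθ.ne'] using this
    have hfacP : ∀ᶠ s in nhdsWithin 0 (Ioi (0:ℝ)), 0 < 1 + (K + ε') * s ^ θ := by
      have : Tendsto (fun s : ℝ => 1 + (K + ε') * s ^ θ) (nhdsWithin 0 (Ioi 0)) (nhds 1) := by
        have := (tendsto_const_nhds (x := (1:ℝ))).add
          ((tendsto_const_nhds (x := K + ε')).mul hu0)
        simpa using this
      exact this.eventually (eventually_gt_nhds one_pos)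
    have hfacM : ∀ᶠ s in nhdsWithin 0 (Ioi (0:ℝ)), 0 < 1 + (K - ε') * s ^ θ := by
      have : Tendsto (fun s : ℝ => 1 + (K - ε') * s ^ θ) (nhdsWithin 0 (Ioi 0)) (nhds 1) := by
        have := (tendsto_const_nhds (x := (1:ℝ))).add
          ((tendsto_const_nhds (x := K - ε')).mul hu0)
        simpa using this
      exact this.eventually (eventually_gt_nhds one_pos)
    filter_upwards [hspos, hs1, hfacP, hfacM, hevP, hevM] with s hs hs1 hfP hfM heP heM
    have huθ : 0 < s ^ θ := Real.rpow_pos_of_pos hs θ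
    have hg : 0 < c ^ (1/α) * s ^ (-1/α) :=
      mul_pos (Real.rpow_pos_of_pos hc _) (Real.rpow_pos_of_pos hs _)
    set g := c ^ (1/α) * s ^ (-1/α) with hgdef
    set XP := g * (1 + (K + ε') * s ^ θ) with hXPdef
    set XM := g * (1 + (K - ε') * s ^ θ) with hXMdef
    have hXPpos : 0 < XP := mul_pos hg hfP
    have hXMpos : 0 < XM := mul_pos hg hfM
    have hp0 : 0 < 1 - s := by linarith
    have hp1 : 1 - s < 1 := by linarith
    -- upper: quantile ≤ XP
    have hnumP : c * XP ^ (-α) + d * XP ^ (-β) + ρ XP * XP ^ (-β) - s < 0 := by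
      have hden : 0 < s * s ^ θ := mul_pos hs huθ
      have := heP
      rw [div_neg_iff] at this
      rcases this with ⟨h1, h2⟩ | ⟨h1, h2⟩
      · linarith
      · exact h1
    have hFXP : 1 - s ≤ F XP := by
      have := hid XP hXPpos
      linarith
    have hub : quantileFun F (1 - s) ≤ XP := by
      rw [hQdef]
      exact (quantile_le_iff hmono hF0 hFtop hrc hp0 hp1 XP).mpr hFXP
    -- lower: XM ≤ quantile
    have hnumM : 0 < c * XM ^ (-α) + d * XM ^ (-β) + ρ XM * XM ^ (-β) - s := by
      have hden : 0 < s * s ^ θ := mul_pos hs huθ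
      have := heM
      rw [lt_div_iff₀ hden] at this
      linarith
    have hFXM : F XM < 1 - s := by
      have := hid XM hXMpos
      linarith
    have hlb : XM ≤ quantileFun F (1 - s) := by
      rw [hQdef]
      refine le_csInf (cdf_set_nonempty hFtop hp1) fun z hz => ?_
      by_contra hzlt
      push_neg at hzlt
      have : F z ≤ F XM := hmono hzlt.le
      have : F z < 1 - s := lt_of_le_of_lt this hFXM
      exact absurd hz (by simpa [Set.mem_setOf_eq] using not_le.mpr this)
    -- conclude
    set Qv := quantileFun F (1 - s) with hQvdef
    have hexpP : (1 + (K + ε') * s ^ θ) = (1 + K * s ^ θ) + ε' * s ^ θ := by ring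
    have hexpM : (1 + (K - ε') * s ^ θ) = (1 + K * s ^ θ) - ε' * s ^ θ := by ring
    have hQgP : Qv / g ≤ 1 + K * s ^ θ + ε' * s ^ θ := by
      rw [div_le_iff₀ hg]
      calc Qv ≤ XP := hub
        _ = (1 + K * s ^ θ + ε' * s ^ θ) * g := by rw [hXPdef]; ring
    have hQgM : 1 + K * s ^ θ - ε' * s ^ θ ≤ Qv / g := by
      rw [le_div_iff₀ hg]
      calc (1 + K * s ^ θ - ε' * s ^ θ) * g = XM := by rw [hXMdef]; ring
        _ ≤ Qv := hlb
    have habs : |(Qv / g - (1 + K * s ^ θ)) / s ^ θ| ≤ ε' := by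
      rw [abs_div, abs_of_pos huθ, div_le_iff₀ huθ, abs_le]
      constructor <;> linarith
    rw [Real.dist_eq, sub_zero]
    calc |(Qv / g - (1 + K * s ^ θ)) / s ^ θ| ≤ ε' := habs
      _ < ε := by rw [hε'def]; linarith
  · -- quantile expansion → tail expansion
    intro h
    set r : ℝ → ℝ := fun s =>
      (quantileFun F (1 - s) / (c ^ (1/α) * s ^ (-1/α)) - (1 + K * s ^ θ)) / s ^ θ with hrdef
    have hid : ∀ s : ℝ, 0 < s →
        c ^ (1/α) * s ^ (-1/α) * (1 + K * s ^ θ + r s * s ^ θ) = quantileFun F (1 - s) := by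
      intro s hs
      have hg : 0 < c ^ (1/α) * s ^ (-1/α) :=
        mul_pos (Real.rpow_pos_of_pos hc _) (Real.rpow_pos_of_pos hs _)
      have huθ : (s : ℝ) ^ θ ≠ 0 := (Real.rpow_pos_of_pos hs θ).ne'
      rw [hrdef]
      field_simp
      ring
    rw [Metric.tendsto_nhds]
    intro ε hε
    set ε' := ε/2 with hε'def
    have hε' : 0 < ε' := by positivity
    have hcc : c ^ (-(β/α)) * c ^ (β/α - 1) = c⁻¹ := by
      rw [← Real.rpow_add hc, show -(β/α) + (β/α - 1) = -1 by ring, Real.rpow_neg_one]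
    set bP := (d + ε')/c with hbPdef
    set bM := (d - ε')/c with hbMdef
    have hBP := keyB α β c d bP hα hβ hc r h
    have hBM := keyB α β c d bM hα hβ hc r h
    have hcne : c ≠ 0 := hc.ne'
    have hsimp : α⁻¹ * c ^ (-(β/α)) * d * c ^ (β/α - 1) = d/(α*c) := by
      linear_combination (α⁻¹ * d) * hcc
    have hLP : -(1/α)*bP + α⁻¹ * c ^ (-(β/α)) * d * c ^ (β/α - 1) < 0 := by
      rw [hsimp, hbPdef, show -(1/α)*((d + ε')/c) + d/(α*c) = -(ε'/(α*c)) from by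
        field_simp; ring]
      have : 0 < ε'/(α*c) := by positivity
      linarith
    have hLM : (0:ℝ) < -(1/α)*bM + α⁻¹ * c ^ (-(β/α)) * d * c ^ (β/α - 1) := by
      rw [hsimp, hbMdef, show -(1/α)*((d - ε')/c) + d/(α*c) = ε'/(α*c) from by
        field_simp; ring]
      positivity
    have hevP := hBP.eventually (eventually_lt_nhds hLP)
    have hevM := hBM.eventually (eventually_gt_nhds hLM)
    have hxpos : ∀ᶠ x : ℝ in atTop, 0 < x := eventually_gt_atTop 0
    have hv0 : Tendsto (fun x : ℝ => x ^ (α - β)) atTop (nhds 0) := by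
      have := tendsto_rpow_neg_atTop (y := β - α) (by linarith)
      simpa [neg_sub] using this
    have hfacB : ∀ b : ℝ, (∀ᶠ x : ℝ in atTop, 0 < 1 + b * x ^ (α - β)) := by
      intro b
      have : Tendsto (fun x : ℝ => 1 + b * x ^ (α - β)) atTop (nhds 1) := by
        have := (tendsto_const_nhds (x := (1:ℝ))).add ((tendsto_const_nhds (x := b)).mul hv0)
        simpa using this
      exact this.eventually (eventually_gt_nhds one_pos)
    have hSsmall : ∀ b : ℝ, (∀ᶠ x : ℝ in atTop, c * x ^ (-α) * (1 + b * x ^ (α - β)) < 1) := by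
      intro b
      have hfac : Tendsto (fun x : ℝ => 1 + b * x ^ (α - β)) atTop (nhds 1) := by
        have := (tendsto_const_nhds (x := (1:ℝ))).add ((tendsto_const_nhds (x := b)).mul hv0)
        simpa using this
      have : Tendsto (fun x : ℝ => c * x ^ (-α) * (1 + b * x ^ (α - β))) atTop (nhds 0) := by
        have := ((tendsto_rpow_neg_atTop hα).const_mul c).mul hfac
        simpa using this
      exact this.eventually (eventually_lt_nhds one_pos)
    filter_upwards [hxpos, hfacB bP, hfacB bM, hSsmall bP, hSsmall bM, hevP, hevM] with
      x hx hfP hfM hsmP hsmM heP heM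
    have hxβ : 0 < x ^ (-β) := Real.rpow_pos_of_pos hx _
    have hxα : 0 < x ^ (-α) := Real.rpow_pos_of_pos hx _
    have hxv : 0 < x ^ (α - β) := Real.rpow_pos_of_pos hx _
    have hxden : 0 < x * x ^ (α - β) := mul_pos hx hxv
    have hαβ : x ^ (-α) * x ^ (α - β) = x ^ (-β) := by
      rw [← Real.rpow_add hx]; ring_nf
    set SP := c * x ^ (-α) * (1 + bP * x ^ (α - β)) with hSPdef
    set SM := c * x ^ (-α) * (1 + bM * x ^ (α - β)) with hSMdef
    have hSPpos : 0 < SP := mul_pos (mul_pos hc hxα) hfP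
    have hSMpos : 0 < SM := mul_pos (mul_pos hc hxα) hfM
    -- upper: 1 - F x ≤ SP
    have hqP : quantileFun F (1 - SP) - x < 0 := by
      have := heP
      rw [div_neg_iff] at this
      rcases this with ⟨h1, h2⟩ | ⟨h1, h2⟩
      · linarith
      · rw [← hid SP hSPpos]; exact h1
    have hFSP : 1 - SP ≤ F x := by
      rw [hQdef] at hqP
      exact (quantile_le_iff hmono hF0 hFtop hrc (by linarith) (by linarith) x).mp (by linarith)
    -- lower: SM < 1 - F x
    have hqM : 0 < quantileFun F (1 - SM) - x := by
      have := heM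
      rw [lt_div_iff₀ hxden, ← hKdef, ← hθdef] at this
      rw [← hid SM hSMpos]
      linarith
    have hFSM : F x < 1 - SM := by
      by_contra hcon
      push_neg at hcon
      have := (quantile_le_iff hmono hF0 hFtop hrc (by linarith) (by linarith) x).mpr hcon
      rw [hQdef] at hqM
      linarith
    -- translate to ρ bound
    have hSidP : SP = c * x ^ (-α) + (d + ε') * x ^ (-β) := by
      rw [hSPdef, hbPdef, ← hαβ]
      field_simp
    have hSidM : SM = c * x ^ (-α) + (d - ε') * x ^ (-β) := by
      rw [hSMdef, hbMdef, ← hαβ]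
      field_simp
    clear heP heM hBP hBM hevP hevM
    rw [Real.dist_eq, sub_zero]
    have hde1 : (d + ε') * x ^ (-β) = d * x ^ (-β) + ε' * x ^ (-β) := by ring
    have hde2 : (d - ε') * x ^ (-β) = d * x ^ (-β) - ε' * x ^ (-β) := by ring
    have hupper : (1 - F x - c * x ^ (-α) - d * x ^ (-β)) / x ^ (-β) ≤ ε' := by
      rw [div_le_iff₀ hxβ]
      linarith
    have hlower : -ε' ≤ (1 - F x - c * x ^ (-α) - d * x ^ (-β)) / x ^ (-β) := by
      rw [le_div_iff₀ hxβ]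
      linarith
    have habs : |(1 - F x - c * x ^ (-α) - d * x ^ (-β)) / x ^ (-β)| ≤ ε' :=
      abs_le.mpr ⟨hlower, hupper⟩
    calc |(1 - F x - c * x ^ (-α) - d * x ^ (-β)) / x ^ (-β)| ≤ ε' := habs
      _ < ε := by rw [hε'def]; linarith
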